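/- Let φ be a finite unsatisfiable set of constraints. A subset C ⊆ φ is a minimal correction subset (MCS) of φ if and only if C is a minimal hitting set of the collection MUSes(φ) of all minimal unsatisfiable subsets of φ. -/

import Mathlib

def Sat {A : Type*} (S : Set (A → Prop)) : Prop := ∃ a : A, ∀ c ∈ S, c a

def IsMUS {A : Type*} (φ U : Set (A → Prop)) : Prop :=
  U ⊆ φ ∧ ¬ Sat U ∧ ∀ U' ⊂ U, Sat U'

def IsMCS {A : Type*} (φ C : Set (A → Prop)) : Prop :=
  C ⊆ φ ∧ Sat (φ \ C) ∧ ∀ C' ⊂ C, ¬ Sat (φ \ C')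

def IsHittingSet {K : Type*} (F : Set (Set K)) (H : Set K) : Prop :=
  ∀ S ∈ F, (H ∩ S).Nonempty

def IsMinHittingSet {K : Type*} (F : Set (Set K)) (H : Set K) : Prop :=
  IsHittingSet F H ∧ ∀ H' ⊂ H, ¬ IsHittingSet F H'

lemma sat_mono {A : Type*} {S T : Set (A → Prop)} (h : T ⊆ S) (hS : Sat S) : Sat T := by
  obtain ⟨a, ha⟩ := hS
  exact ⟨a, fun c hc => ha c (h hc)⟩

/-- Every finite unsatisfiable set contains a minimal unsatisfiable subset. -/
lemma exists_mus {A : Type*} {S : Set (A → Prop)} (hfin : S.Finite) (hunsat : ¬ Sat S) :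
    ∃ U ⊆ S, ¬ Sat U ∧ ∀ U' ⊂ U, Sat U' := by
  classical
  haveI := hfin.fintype
  set F : Finset (Finset S.Elem) :=
    Finset.univ.filter (fun T : Finset S.Elem => ¬ Sat (Subtype.val '' (T : Set S.Elem))) with hF
  have hself : Finset.univ ∈ F := by
    simp only [hF, Finset.mem_filter, Finset.mem_univ, true_and]
    intro hs
    apply hunsat
    refine sat_mono ?_ hs
    intro x hx
    exact ⟨⟨x, hx⟩, by simp, rfl⟩
  obtain ⟨T, hTF, hmin⟩ := Finset.exists_minimal (s := F) ⟨_, hself⟩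
  have hTunsat : ¬ Sat (Subtype.val '' (T : Set S.Elem)) := by
    simpa [hF] using hTF
  refine ⟨Subtype.val '' (T : Set S.Elem), ?_, hTunsat, ?_⟩
  · rintro x ⟨y, _, rfl⟩; exact y.2
  · intro U' hU'
    by_contra hU'sat
    set T' : Finset S.Elem := T.filter (fun y => (y : A → Prop) ∈ U') with hT'
    have himg : Subtype.val '' (T' : Set S.Elem) = U' := by
      apply Set.Subset.antisymm
      · rintro x ⟨y, hy, rfl⟩
        simp only [hT', Finset.coe_filter, Set.mem_setOf_eq] at hy
        exact hy.2
      · intro x hx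
        obtain ⟨y, hy, rfl⟩ := hU'.1 hx
        exact ⟨y, by simp [hT', Finset.mem_coe.mp hy, hx], rfl⟩
    have hT'lt : T' < T := by
      refine ⟨Finset.filter_subset _ _, fun hle => hU'.2 ?_⟩
      rintro x ⟨y, hyT, rfl⟩
      have hyT' : y ∈ T' := hle (Finset.mem_coe.mp hyT)
      simp only [hT', Finset.mem_filter] at hyT'
      exact hyT'.2
    have hT'F : T' ∈ F := by
      simp only [hF, Finset.mem_filter, Finset.mem_univ, true_and]
      rw [himg]; exact hU'sat
    exact hT'lt.not_ge (hmin hT'F hT'lt.le)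

lemma sat_iff_hits {A : Type*} {φ C' : Set (A → Prop)} (hfin : φ.Finite) (hC' : C' ⊆ φ) :
    Sat (φ \ C') ↔ IsHittingSet {U | IsMUS φ U} C' := by
  constructor
  · intro hsat U hU
    by_contra hemp
    rw [Set.not_nonempty_iff_eq_empty] at hemp
    have hsub : U ⊆ φ \ C' := fun x hx => ⟨hU.1 hx, fun hxC =>
      Set.notMem_empty x (hemp ▸ Set.mem_inter hxC hx)⟩
    exact hU.2.1 (sat_mono hsub hsat)
  · intro hhit
    by_contra hunsat
    obtain ⟨U, hUsub, hUunsat, hUmin⟩ := exists_mus (hfin.subset Set.diff_subset) hunsat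
    have hmus : IsMUS φ U := ⟨hUsub.trans Set.diff_subset, hUunsat, hUmin⟩
    obtain ⟨x, hxC, hxU⟩ := hhit U hmus
    exact (hUsub hxU).2 hxC

/-- Hitting set duality, second direction: `C ⊆ φ` is an MCS of `φ` iff it is a
minimal hitting set of the family of all MUSes of `φ`. -/
theorem mcs_iff_min_hitting_set_of_muses {A : Type*} (φ : Set (A → Prop))
    (hfin : φ.Finite) (hunsat : ¬ Sat φ) (C : Set (A → Prop)) (hC : C ⊆ φ) :
    IsMCS φ C ↔ IsMinHittingSet {U | IsMUS φ U} C := by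
  constructor
  · rintro ⟨_, hsat, hmin⟩
    refine ⟨(sat_iff_hits hfin hC).mp hsat, fun C' hC' hhit => ?_⟩
    exact hmin C' hC' ((sat_iff_hits hfin (hC'.1.trans hC)).mpr hhit)
  · rintro ⟨hhit, hmin⟩
    refine ⟨hC, (sat_iff_hits hfin hC).mpr hhit, fun C' hC' hsat => ?_⟩
    exact hmin C' hC' ((sat_iff_hits hfin (hC'.1.trans hC)).mp hsat)
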